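/- Let θ ∈ ℝ and x ∈ {0,1}, and let ψ ∈ ℂ² be arbitrary. Then (id_{ℂ²} ⊗ φ_x)( (id_{ℂ²} ⊗ A_θᴴ) ( CNOT₂₁ (ψ ⊗ v₊) ) ) = (1/√2)·(−i)^x·exp(i·(θ + π/2)·x·X)·ψ, equivalently = (1/√2)·X^x·exp(i·θ·x·X)·ψ. (The factor (−i)^x is a global phase; the cited statement omits it.) -/

import Mathlib

open Finset Matrix

/-- The 2×2 matrix `exp(iφX) = [[cos φ, i sin φ],[i sin φ, cos φ]]`. -/
noncomputable def Rm (φ : ℝ) : Matrix (Fin 2) (Fin 2) ℂ :=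
  fun a b => if a = b then (Real.cos φ : ℂ) else Complex.I * (Real.sin φ : ℂ)

/-- The Pauli matrix `X = [[0,1],[1,0]]`. -/
def Xm : Matrix (Fin 2) (Fin 2) ℂ := fun a b => if a = b then 0 else 1

/-- The matrix `A_θ` with `A_θ e₀ = e₀` and `A_θ e₁ = exp(−iθX) e₁`. -/
noncomputable def Aθ (θ : ℝ) : Matrix (Fin 2) (Fin 2) ℂ :=
  fun a b => if b = 0 then (if a = 0 then 1 else 0) else Rm (-θ) a 1

/-- Tensor product `ψ ⊗ w ∈ ℂ² ⊗ ℂ²`, as a function of the two indices. -/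
noncomputable def tensor2 (ψ w : Fin 2 → ℂ) : Fin 2 → Fin 2 → ℂ :=
  fun a b => ψ a * w b

/-- `CNOT₂₁` (control qubit 2, target qubit 1): `e_a ⊗ e_b ↦ e_{a ⊕ b} ⊗ e_b`. -/
def cnot21 (v : Fin 2 → Fin 2 → ℂ) : Fin 2 → Fin 2 → ℂ :=
  fun a b => v (a + b) b

/-- Apply a matrix `M` to the second tensor factor: `id ⊗ M`. -/
noncomputable def applySnd (M : Matrix (Fin 2) (Fin 2) ℂ)
    (v : Fin 2 → Fin 2 → ℂ) : Fin 2 → Fin 2 → ℂ :=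
  fun a b => ∑ c, M b c * v a c

/-- The state `v₊ = (e₀ + e₁)/√2`. -/
noncomputable def vplus : Fin 2 → ℂ := fun _ => ((Real.sqrt 2 : ℝ) : ℂ)⁻¹

/-!
Because `v₊` is uniform, the `x`-th coordinate of the second qubit after `CNOT₂₁` and `id ⊗ A_θᴴ`
is `(1/√2) ∑_c (A_θᴴ)_{x c} ψ(a + c)`. Row `x` of `A_θᴴ` is row `x` of `R = exp(iθxX)`, and `R` is a
circulant over `ℤ/2`, so the sum is `(Rψ)(a + x) = (X^x R ψ)(a)`. The phase form follows from
`exp(iπ/2·X) = iX`.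
-/

lemma Rm_zero : Rm 0 = 1 := by
  ext i j
  simp [Rm, Matrix.one_apply]

lemma Rm_add_pi_div_two (φ : ℝ) : Rm (φ + Real.pi / 2) = Complex.I • (Xm * Rm φ) := by
  ext i j
  fin_cases i <;> fin_cases j <;>
    simp [Rm, Xm, Matrix.mul_apply, Fin.sum_univ_two, Real.cos_add_pi_div_two,
      Real.sin_add_pi_div_two] <;> ring_nf <;> simp

lemma Rm_apply_add_add (φ : ℝ) (a i j : Fin 2) : Rm φ (a + i) (a + j) = Rm φ i j := by
  simp only [Rm, add_right_inj]

lemma Xm_pow_mulVec (x : Fin 2) (v : Fin 2 → ℂ) (a : Fin 2) :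
    (Xm ^ (x : ℕ) *ᵥ v) a = v (a + x) := by
  fin_cases x <;> fin_cases a <;> simp [Xm, Matrix.mulVec, dotProduct, Fin.sum_univ_two]

lemma Xm_pow_mul_Rm_mulVec (φ : ℝ) (x : Fin 2) (ψ : Fin 2 → ℂ) (a : Fin 2) :
    ((Xm ^ (x : ℕ) * Rm φ) *ᵥ ψ) a = ∑ c, Rm φ x c * ψ (a + c) := by
  rw [← Matrix.mulVec_mulVec, Xm_pow_mulVec, Matrix.mulVec, dotProduct,
    ← Equiv.sum_comp (Equiv.addLeft a)]
  simp only [Equiv.coe_addLeft, Rm_apply_add_add]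

-- Row `0` of `A_θᴴ` is `e₀ᵀ`, and row `1` is row `1` of `exp(−iθX)ᴴ = exp(iθX)`.
lemma Aθ_conjTranspose_apply (θ : ℝ) (x c : Fin 2) :
    (Aθ θ)ᴴ x c = Rm (θ * (x : ℕ)) x c := by
  fin_cases x <;> fin_cases c <;> simp [Aθ, Rm, -Complex.ofReal_sin, -Complex.ofReal_cos,
    Complex.conj_ofReal]

lemma applySnd_cnot21_tensor2 (M : Matrix (Fin 2) (Fin 2) ℂ) (ψ w : Fin 2 → ℂ) (a x : Fin 2) :
    applySnd M (cnot21 (tensor2 ψ w)) a x = ∑ c, M x c * w c * ψ (a + c) := by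
  simp only [applySnd, cnot21, tensor2]
  exact Finset.sum_congr rfl fun c _ => by ring

lemma neg_I_pow_smul_Rm (θ : ℝ) (x : Fin 2) :
    (-Complex.I) ^ (x : ℕ) • Rm ((θ + Real.pi / 2) * (x : ℕ)) = Xm ^ (x : ℕ) * Rm (θ * (x : ℕ)) := by
  fin_cases x
  · simp [Rm_zero]
  · simp [Rm_add_pi_div_two, smul_smul]

theorem stmt19 (θ : ℝ) (x : Fin 2) (ψ : Fin 2 → ℂ) :
    -- (id ⊗ φ_x) ((id ⊗ A_θᴴ) (CNOT₂₁ (ψ ⊗ v₊)))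
    --   = (1/√2)·(−i)^x·exp(i(θ+π/2)xX)·ψ
    (fun a : Fin 2 => applySnd (Aθ θ)ᴴ (cnot21 (tensor2 ψ vplus)) a x)
      = (fun a : Fin 2 => ((Real.sqrt 2 : ℝ) : ℂ)⁻¹ * (-Complex.I) ^ (x : ℕ) *
          (Rm ((θ + Real.pi / 2) * ((x : ℕ) : ℝ))).mulVec ψ a) ∧
    -- equivalently, = (1/√2)·X^x·exp(iθxX)·ψ
    (fun a : Fin 2 => applySnd (Aθ θ)ᴴ (cnot21 (tensor2 ψ vplus)) a x)
      = (fun a : Fin 2 => ((Real.sqrt 2 : ℝ) : ℂ)⁻¹ *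
          ((Xm ^ (x : ℕ)) * Rm (θ * ((x : ℕ) : ℝ))).mulVec ψ a) := by
  have hX : (fun a : Fin 2 => applySnd (Aθ θ)ᴴ (cnot21 (tensor2 ψ vplus)) a x)
      = fun a => ((Real.sqrt 2 : ℝ) : ℂ)⁻¹ * (((Xm ^ (x : ℕ)) * Rm (θ * ((x : ℕ) : ℝ))) *ᵥ ψ) a := by
    funext a
    rw [applySnd_cnot21_tensor2, Xm_pow_mul_Rm_mulVec, Finset.mul_sum]
    simp only [Aθ_conjTranspose_apply, vplus]
    exact Finset.sum_congr rfl fun c _ => by ring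
  refine ⟨?_, hX⟩
  rw [hX, ← neg_I_pow_smul_Rm]
  funext a
  rw [Matrix.smul_mulVec, Pi.smul_apply, smul_eq_mul, mul_assoc]
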